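/- For every positive integer k and constant C > 0 there exists A > 0 such that for all sufficiently large T, all H with 0 < H ≤ C·√T·(log T)^k, and all t ∈ [T, T+H], |g(t) − ∑_{1 ≤ m < √(T/(2π))} cos(t·log m)/√m| ≤ A·(log T)^k / T^(1/4). -/

import Mathlib

open Complex Real Filter Finset

noncomputable section

/-- The Riemann-Siegel theta function: continuous, vanishing at 0, with
`exp(i θ t) = π^(-it/2) Γ(1/4 + it/2) / |Γ(1/4 + it/2)|`. -/
def IsRSTheta (θ : ℝ → ℝ) : Prop :=
  Continuous θ ∧ θ 0 = 0 ∧ ∀ t : ℝ,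
    Complex.exp (Complex.I * θ t) =
      (Real.pi : ℂ) ^ (-(Complex.I * t) / 2) *
        (Complex.Gamma (1/4 + Complex.I * t / 2) /
          (‖Complex.Gamma (1/4 + Complex.I * t / 2)‖ : ℂ))

/-- The Hardy Z-function attached to a theta function. -/
def HardyZ (θ : ℝ → ℝ) (t : ℝ) : ℝ :=
  (Complex.exp (Complex.I * θ t) * riemannZeta (1/2 + Complex.I * t)).re

/-- A Gram sequence for θ: strictly increasing (for ν ≥ 1), positive, tending to ∞,
with `θ (t_ν) = π ν`. -/
def IsGramSeq (θ : ℝ → ℝ) (ts : ℕ → ℝ) : Prop :=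
  (∀ ν : ℕ, 1 ≤ ν → ts ν < ts (ν + 1)) ∧
  Filter.Tendsto ts Filter.atTop Filter.atTop ∧
  ∀ ν : ℕ, 1 ≤ ν → 0 < ts ν ∧ θ (ts ν) = Real.pi * ν

/-- An admissible function: increasing, tending to +∞, eventually bounded by √(log T). -/
def Admissible (ψ : ℝ → ℝ) : Prop :=
  Monotone ψ ∧ Filter.Tendsto ψ Filter.atTop Filter.atTop ∧
  ∃ T₁ : ℝ, ∀ T ≥ T₁, ψ T ≤ Real.sqrt (Real.log T)

/-- `H̄(T) = √T ψ(T) log T`. -/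
def Hbar (ψ : ℝ → ℝ) (T : ℝ) : ℝ := Real.sqrt T * ψ T * Real.log T

/-- Sum of `f ν` over indices `ν ≥ 1` with `T ≤ t_ν ≤ T + H`. -/
def gramSum (ts : ℕ → ℝ) (T H : ℝ) (f : ℕ → ℝ) : ℝ :=
  ∑' ν : ℕ, if 1 ≤ ν ∧ T ≤ ts ν ∧ ts ν ≤ T + H then f ν else 0

/-- `G(T,H)`: the number of indices `ν ≥ 1` with `T ≤ t_ν`, `t_{ν+1} ≤ T + H` and
`Z(t_ν) Z(t_{ν+1}) < 0`. -/
def GCount (θ : ℝ → ℝ) (ts : ℕ → ℝ) (T H : ℝ) : ℕ :=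
  Nat.card {ν : ℕ // 1 ≤ ν ∧ T ≤ ts ν ∧ ts (ν + 1) ≤ T + H ∧
    HardyZ θ (ts ν) * HardyZ θ (ts (ν + 1)) < 0}

/-- `μ(T,H) = sup_{t ∈ [T,T+H]} |Z(t)|`. -/
def muSup (θ : ℝ → ℝ) (T H : ℝ) : ℝ :=
  sSup ((fun t => |HardyZ θ t|) '' Set.Icc T (T + H))

/-- `g(t) = ∑_{1 ≤ m ≤ √(t/2π)} cos(t log m)/√m`. -/
def gfun (t : ℝ) : ℝ :=
  ∑ m ∈ Finset.Icc 1 ⌊Real.sqrt (t / (2 * Real.pi))⌋₊,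
    Real.cos (t * Real.log m) / Real.sqrt m

/-!
The difference is the block of terms with `⌈√(T/2π)⌉ ≤ m ≤ ⌊√(t/2π)⌋`. Each term is at most
`1/√m ≤ (2π/T)^(1/4)`, and by concavity of the square root the block has at most
`(t - T)/√T + 1 ≤ C (log T)^k + 1` terms.
-/

theorem sum_Icc_floor_sub_sum_Ico_ceil {M : Type*} [AddCommGroup M] (f : ℕ → M) {a b : ℝ}
    (ha : 0 < a) (hab : a ≤ b) :
    ∑ m ∈ Icc 1 ⌊b⌋₊, f m - ∑ m ∈ Ico 1 ⌈a⌉₊, f m = ∑ m ∈ Icc ⌈a⌉₊ ⌊b⌋₊, f m := by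
  have h1 : 1 ≤ ⌈a⌉₊ := Nat.one_le_ceil_iff.mpr ha
  have h2 : ⌈a⌉₊ ≤ ⌊b⌋₊ + 1 :=
    (Nat.ceil_le_floor_add_one a).trans (by gcongr)
  rw [← Ico_add_one_right_eq_Icc, ← Ico_add_one_right_eq_Icc, ← sum_Ico_consecutive f h1 h2,
    add_sub_cancel_left]

theorem natCast_card_Icc_ceil_floor_le {a b : ℝ} (hb : 0 ≤ b) (hab : a ≤ b + 1) :
    ((Icc ⌈a⌉₊ ⌊b⌋₊).card : ℝ) ≤ b - a + 1 := by
  rw [Nat.card_Icc]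
  rcases le_total ⌈a⌉₊ (⌊b⌋₊ + 1) with h | h
  · rw [Nat.cast_sub h]
    push_cast
    linarith [Nat.floor_le hb, Nat.le_ceil a]
  · rw [Nat.sub_eq_zero_of_le h, Nat.cast_zero]
    linarith

theorem abs_cos_mul_log_div_sqrt_le (t : ℝ) {a : ℝ} (ha : 0 < a) {m : ℕ} (hm : a ≤ m) :
    |Real.cos (t * Real.log m) / √m| ≤ 1 / √a := by
  rw [abs_div, abs_of_nonneg (Real.sqrt_nonneg _)]
  gcongr
  exact Real.abs_cos_le_one _

theorem abs_sum_Icc_ceil_floor_cos_div_sqrt_le (t : ℝ) {a b : ℝ} (ha : 0 < a) (hab : a ≤ b) :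
    |∑ m ∈ Icc ⌈a⌉₊ ⌊b⌋₊, Real.cos (t * Real.log m) / √m| ≤ (b - a + 1) / √a := by
  calc |∑ m ∈ Icc ⌈a⌉₊ ⌊b⌋₊, Real.cos (t * Real.log m) / √m|
      ≤ ∑ m ∈ Icc ⌈a⌉₊ ⌊b⌋₊, |Real.cos (t * Real.log m) / √m| := abs_sum_le_sum_abs _ _
    _ ≤ (Icc ⌈a⌉₊ ⌊b⌋₊).card * (1 / √a) := by
        rw [← nsmul_eq_mul]
        refine sum_le_card_nsmul _ _ _ fun m hm ↦ abs_cos_mul_log_div_sqrt_le t ha ?_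
        exact (Nat.le_ceil a).trans (by exact_mod_cast (mem_Icc.mp hm).1)
    _ ≤ (b - a + 1) * (1 / √a) := by
        gcongr
        exact natCast_card_Icc_ceil_floor_le (ha.le.trans hab) (by linarith)
    _ = (b - a + 1) / √a := mul_one_div _ _

theorem Real.sqrt_le_sqrt_add_sub_div {x y : ℝ} (hx : 0 ≤ x) (hy : 0 < y) :
    √x ≤ √y + (x - y) / (2 * √y) := by
  have hy' : 0 < √y := Real.sqrt_pos.mpr hy
  rw [← sub_le_iff_le_add', le_div_iff₀ (by positivity)]
  nlinarith [sq_nonneg (√x - √y), Real.sq_sqrt hx, Real.sq_sqrt hy.le]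

theorem sqrt_div_two_pi_le_add {T t : ℝ} (hT : 0 < T) (hTt : T ≤ t) :
    √(t / (2 * π)) ≤ √(T / (2 * π)) + (t - T) / √T := by
  have h2π : 1 ≤ 2 * √(2 * π) := by
    nlinarith [Real.sqrt_le_sqrt (show (1:ℝ) ≤ 2 * π by linarith [Real.pi_gt_three]), Real.sqrt_one]
  have hT' : 0 < √T := Real.sqrt_pos.mpr hT
  have hdiff : (t / (2 * π) - T / (2 * π)) / (2 * √(T / (2 * π)))
      = (t - T) / (2 * √(2 * π) * √T) := by
    have h := Real.sq_sqrt (show 0 ≤ 2 * π by positivity)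
    rw [Real.sqrt_div hT.le]
    field_simp
    rw [h]
    ring
  refine (Real.sqrt_le_sqrt_add_sub_div (y := T / (2 * π))
    (div_nonneg (by linarith) (by positivity)) (by positivity)).trans ?_
  rw [hdiff]
  gcongr
  nlinarith

theorem g_truncation_general (k : ℕ) (C : ℝ) (hC : 0 < C) :
    ∃ A > (0:ℝ), ∃ T₀ : ℝ, ∀ T ≥ T₀, ∀ H : ℝ, 0 < H →
      H ≤ C * Real.sqrt T * (Real.log T) ^ k →
      ∀ t ∈ Set.Icc T (T + H),
        |gfun t - ∑ m ∈ Finset.Ico 1 ⌈Real.sqrt (T / (2 * Real.pi))⌉₊,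
            Real.cos (t * Real.log m) / Real.sqrt m|
          ≤ A * (Real.log T) ^ k / T ^ ((1:ℝ)/4) := by
  refine ⟨(C + 1) * (2 * π) ^ ((1:ℝ)/4), by positivity, Real.exp 1, ?_⟩
  rintro T hT H - hH t ⟨hTt, htH⟩
  have hT0 : 0 < T := (Real.exp_pos 1).trans_le hT
  have hLk : 1 ≤ Real.log T ^ k := one_le_pow₀ ((le_log_iff_exp_le hT0).mpr hT)
  have hinv : 1 / √√(T / (2 * π)) = (2 * π) ^ ((1:ℝ)/4) / T ^ ((1:ℝ)/4) := by
    rw [Real.sqrt_eq_rpow, Real.sqrt_eq_rpow, ← Real.rpow_mul (by positivity),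
      Real.div_rpow hT0.le (by positivity)]
    norm_num
  set a := √(T / (2 * π))
  set b := √(t / (2 * π))
  have ha : 0 < a := by positivity
  have hab : a ≤ b := Real.sqrt_le_sqrt (by gcongr)
  have hba : b - a ≤ C * Real.log T ^ k :=
    calc b - a ≤ (t - T) / √T := by linarith [sqrt_div_two_pi_le_add hT0 hTt]
      _ ≤ H / √T := by gcongr; linarith
      _ ≤ C * Real.log T ^ k := by
        rw [div_le_iff₀ (by positivity)]
        linarith
  rw [gfun, sum_Icc_floor_sub_sum_Ico_ceil _ ha hab]
  calc _ ≤ (b - a + 1) / √a := abs_sum_Icc_ceil_floor_cos_div_sqrt_le t ha hab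
    _ ≤ (C + 1) * Real.log T ^ k * (1 / √a) := by
        rw [div_eq_mul_one_div]
        gcongr
        linarith
    _ = _ := by rw [hinv]; ring

theorem g_truncation (k : ℕ) (hk : 1 ≤ k) (C : ℝ) (hC : 0 < C) :
    ∃ A > (0:ℝ), ∃ T₀ : ℝ, ∀ T ≥ T₀, ∀ H : ℝ, 0 < H →
      H ≤ C * Real.sqrt T * (Real.log T) ^ k →
      ∀ t ∈ Set.Icc T (T + H),
        |gfun t - ∑ m ∈ Finset.Ico 1 ⌈Real.sqrt (T / (2 * Real.pi))⌉₊,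
            Real.cos (t * Real.log m) / Real.sqrt m|
          ≤ A * (Real.log T) ^ k / T ^ ((1:ℝ)/4) :=
  g_truncation_general k C hC
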